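/- For any s ∈ ℝ, 1 ≤ p ≤ ∞, and any tempered distribution u with u ∈ B^{s+1}_{p,1} ∩ B^s_{p,∞}, u nonzero, the logarithmic interpolation inequality holds: ‖u‖_{B^s_{p,1}} ≤ C ‖u‖_{B^s_{p,∞}} · ln(e + ‖u‖_{B^{s+1}_{p,1}} / ‖u‖_{B^s_{p,∞}}) for some constant C depending only on s and the dyadic partition. -/
import Mathlib


open MeasureTheory Set Filter

/-- **Logarithmic interpolation inequality** in Besov spaces, formulated at the level of the
Littlewood–Paley block norms.  With `a j = ‖Δ_j u‖_{L^p}` (`j ≥ -1`, reindexed over `ℕ`), the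
Besov norms are `‖u‖_{B^s_{p,1}} = Σ_j 2^{js} a_j`, `‖u‖_{B^s_{p,∞}} = sup_j 2^{js} a_j`,
`‖u‖_{B^{s+1}_{p,1}} = Σ_j 2^{j(s+1)} a_j`, and the inequality reads
`‖u‖_{B^s_{p,1}} ≤ C ‖u‖_{B^s_{p,∞}} · ln(e + ‖u‖_{B^{s+1}_{p,1}} / ‖u‖_{B^s_{p,∞}})`
for every nonzero `u ∈ B^{s+1}_{p,1} ∩ B^s_{p,∞}`, with `C` depending only on `s`. -/
theorem besov_log_interpolation (s : ℝ) :
    ∃ C > (0:ℝ), ∀ a : ℕ → ℝ,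
      (∀ j, 0 ≤ a j) →
      Summable (fun j : ℕ => (2:ℝ) ^ ((j : ℝ) * (s + 1)) * a j) →
      (⨆ j : ℕ, (2:ℝ) ^ ((j : ℝ) * s) * a j) ≠ 0 →
      (∑' j : ℕ, (2:ℝ) ^ ((j : ℝ) * s) * a j) ≤
        C * (⨆ j : ℕ, (2:ℝ) ^ ((j : ℝ) * s) * a j) *
          Real.log (Real.exp 1 +
            (∑' j : ℕ, (2:ℝ) ^ ((j : ℝ) * (s + 1)) * a j) /
              (⨆ j : ℕ, (2:ℝ) ^ ((j : ℝ) * s) * a j)) := by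
  have hlog2 : (0:ℝ) < Real.log 2 := Real.log_pos one_lt_two
  refine ⟨1 / Real.log 2 + 2, by positivity, ?_⟩
  intro a ha hgsum hMne
  set f : ℕ → ℝ := fun j => (2:ℝ) ^ ((j:ℝ) * s) * a j with hf_def
  set g : ℕ → ℝ := fun j => (2:ℝ) ^ ((j:ℝ) * (s+1)) * a j with hg_def
  have hfge0 : ∀ j, 0 ≤ f j := fun j => by
    have := ha j; simp only [hf_def]; positivity
  have hgge0 : ∀ j, 0 ≤ g j := fun j => by
    have := ha j; simp only [hg_def]; positivity
  have hfg : ∀ j, f j = (2:ℝ) ^ (-(j:ℝ)) * g j := by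
    intro j
    simp only [hf_def, hg_def]
    rw [← mul_assoc, ← Real.rpow_add two_pos]
    congr 2
    ring
  have hfle : ∀ j, f j ≤ g j := by
    intro j
    rw [hfg j]
    have h1 : (2:ℝ) ^ (-(j:ℝ)) ≤ 1 :=
      Real.rpow_le_one_of_one_le_of_nonpos one_le_two (neg_nonpos.2 (Nat.cast_nonneg j))
    calc (2:ℝ) ^ (-(j:ℝ)) * g j ≤ 1 * g j :=
          mul_le_mul_of_nonneg_right h1 (hgge0 j)
      _ = g j := one_mul _
  have hfsum : Summable f := hgsum.of_nonneg_of_le hfge0 hfle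
  set S : ℝ := ∑' j, g j with hS_def
  set M : ℝ := ⨆ j, f j with hM_def
  have hgS : ∀ j, g j ≤ S := fun j => Summable.le_tsum hgsum j (fun i _ => hgge0 i)
  have hbdd : BddAbove (Set.range f) := by
    refine ⟨S, ?_⟩
    rintro x ⟨j, rfl⟩
    exact (hfle j).trans (hgS j)
  have hMle : ∀ j, f j ≤ M := fun j => le_ciSup hbdd j
  have hM0 : 0 ≤ M := (hfge0 0).trans (hMle 0)
  have hMpos : 0 < M := lt_of_le_of_ne hM0 (Ne.symm hMne)
  have hMS : M ≤ S := ciSup_le fun j => (hfle j).trans (hgS j)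
  have hSpos : 0 < S := hMpos.trans_le hMS
  set r : ℝ := S / M with hr_def
  have hr1 : 1 ≤ r := (one_le_div hMpos).2 hMS
  have hrpos : 0 < r := lt_of_lt_of_le zero_lt_one hr1
  have hlogb0 : 0 ≤ Real.logb 2 r := Real.logb_nonneg one_lt_two hr1
  set N : ℕ := ⌈Real.logb 2 r⌉₊ with hN_def
  have h2N : r ≤ (2:ℝ) ^ (N:ℝ) := by
    calc r = (2:ℝ) ^ (Real.logb 2 r) := (Real.rpow_logb two_pos (by norm_num) hrpos).symm
      _ ≤ (2:ℝ) ^ (N:ℝ) :=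
          Real.rpow_le_rpow_of_exponent_le one_le_two (Nat.le_ceil _)
  -- tail bound
  have hftail : Summable (fun i => f (i + N)) := (summable_nat_add_iff N).2 hfsum
  have hgtail : Summable (fun i => g (i + N)) := (summable_nat_add_iff N).2 hgsum
  have hgtailS : (∑' i, g (i + N)) ≤ S := by
    have h := Summable.sum_add_tsum_nat_add N hgsum
    have hhead : 0 ≤ ∑ i ∈ Finset.range N, g i :=
      Finset.sum_nonneg fun i _ => hgge0 i
    linarith [h]
  have htail : (∑' i, f (i + N)) ≤ (2:ℝ) ^ (-(N:ℝ)) * S := by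
    have hterm : ∀ i, f (i + N) ≤ (2:ℝ) ^ (-(N:ℝ)) * g (i + N) := by
      intro i
      rw [hfg (i + N)]
      have : (2:ℝ) ^ (-((i + N : ℕ):ℝ)) ≤ (2:ℝ) ^ (-(N:ℝ)) := by
        apply Real.rpow_le_rpow_of_exponent_le one_le_two
        push_cast
        linarith [Nat.cast_nonneg (α := ℝ) i]
      exact mul_le_mul_of_nonneg_right this (hgge0 _)
    calc (∑' i, f (i + N)) ≤ ∑' i, (2:ℝ) ^ (-(N:ℝ)) * g (i + N) :=
          Summable.tsum_le_tsum hterm hftail (hgtail.mul_left _)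
      _ = (2:ℝ) ^ (-(N:ℝ)) * ∑' i, g (i + N) := tsum_mul_left
      _ ≤ (2:ℝ) ^ (-(N:ℝ)) * S := by
          apply mul_le_mul_of_nonneg_left hgtailS (by positivity)
  have htail2 : (2:ℝ) ^ (-(N:ℝ)) * S ≤ M := by
    rw [Real.rpow_neg (by norm_num), mul_comm, ← div_eq_mul_inv]
    have h1 : S / (2:ℝ) ^ (N:ℝ) ≤ S / r :=
      div_le_div_of_nonneg_left hSpos.le hrpos h2N
    have h2 : S / r = M := by
      rw [hr_def]
      field_simp
    linarith
  have hhead : (∑ i ∈ Finset.range N, f i) ≤ (N:ℝ) * M := by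
    calc (∑ i ∈ Finset.range N, f i) ≤ ∑ i ∈ Finset.range N, M :=
          Finset.sum_le_sum fun i _ => hMle i
      _ = (N:ℝ) * M := by rw [Finset.sum_const, Finset.card_range, nsmul_eq_mul]
  have hsplit : (∑' j, f j) ≤ ((N:ℝ) + 1) * M := by
    have h := Summable.sum_add_tsum_nat_add N hfsum
    have : (∑' j, f j) = (∑ i ∈ Finset.range N, f i) + ∑' i, f (i + N) := h.symm
    rw [this]
    have := htail.trans htail2
    linarith
  -- logarithmic bounds
  set L : ℝ := Real.log (Real.exp 1 + r) with hL_def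
  have hL1 : 1 ≤ L := by
    rw [hL_def, Real.le_log_iff_exp_le (by positivity)]
    exact le_add_of_nonneg_right hrpos.le
  have hlogr : Real.log r ≤ L := by
    rw [hL_def]
    exact Real.log_le_log hrpos (by linarith [Real.exp_pos 1])
  have hNbound : (N:ℝ) + 1 ≤ Real.logb 2 r + 2 := by
    have := Nat.ceil_lt_add_one hlogb0
    rw [hN_def]
    linarith
  have hlogbL : Real.logb 2 r ≤ L / Real.log 2 := by
    rw [Real.logb]
    exact div_le_div_of_nonneg_right hlogr hlog2.le |>.trans_eq rfl
  have hfinal : ((N:ℝ) + 1) * M ≤ (1 / Real.log 2 + 2) * M * L := by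
    have h1 : ((N:ℝ) + 1) ≤ L / Real.log 2 + 2 := by linarith
    have h2 : L / Real.log 2 + 2 ≤ L / Real.log 2 + 2 * L := by nlinarith
    have h3 : (1 / Real.log 2 + 2) * L = L / Real.log 2 + 2 * L := by ring
    nlinarith [hMpos]
  calc (∑' j, f j) ≤ ((N:ℝ) + 1) * M := hsplit
    _ ≤ (1 / Real.log 2 + 2) * M * L := hfinal
    _ = (1 / Real.log 2 + 2) * M * Real.log (Real.exp 1 + S / M) := by rw [hL_def, hr_def]
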